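/- arXiv:1502.04402 — 7 statements merged into one kernel-verified Lean document; each statement's English description precedes it below -/
import Mathlib

section
/- For any 2×2 complex (or real) matrix A with trace zero, the infimum over all invertible 2×2 matrices Ω of the operator norm of Ω A Ω⁻¹ equals the square root of the absolute value of det A. -/
/-!
Every complex 2×2 matrix is conjugate to an upper triangular one, `!![b, c; 0, -b]` when the trace
vanishes, and then `det A = -b²`. The eigenvalue `b` survives every conjugation and bounds the
operator norm from below, so the infimum is at least `‖b‖`. Conjugating further by `diag(t, 1)`
turns the corner entry into `t c`, and letting `t → 0` pushes the norm down to that of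
`diag(b, -b)`, which is `‖b‖`.
-/

/-- Operator norm (on `ℓ²`) of a 2×2 complex matrix. -/
noncomputable def opNormC (A : Matrix (Fin 2) (Fin 2) ℂ) : ℝ :=
  ‖Matrix.toEuclideanCLM (𝕜 := ℂ) (n := Fin 2) A‖

open Matrix Filter Topology
open scoped Matrix.Norms.L2Operator ComplexOrder

theorem csInf_le_of_tendsto {ι α : Type*} [ConditionallyCompleteLattice α] [TopologicalSpace α]
    [ClosedIciTopology α] {S : Set α} {f : ι → α} {l : Filter ι} [l.NeBot] {a : α}
    (hS : BddBelow S) (hf : ∀ᶠ i in l, f i ∈ S) (hlim : Tendsto f l (𝓝 a)) : sInf S ≤ a :=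
  ge_of_tendsto hlim (hf.mono fun _ hi => csInf_le hS hi)

namespace Matrix

section Spectrum

variable {R : Type*} [CommRing R]

theorem spectrum_conj {n : Type*} [Fintype n] [DecidableEq n] {Ω : Matrix n n R} (hΩ : IsUnit Ω)
    (A : Matrix n n R) : spectrum R (Ω * A * Ω⁻¹) = spectrum R A := by
  obtain ⟨u, rfl⟩ := hΩ
  rw [← coe_units_inv, spectrum.units_conjugate]

theorem mem_spectrum_upper_triangular_fin_two [Nontrivial R] (b c d : R) :
    b ∈ spectrum R !![b, c; 0, d] := by
  rw [spectrum.mem_iff, isUnit_iff_isUnit_det, det_fin_two]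
  simp [Algebra.algebraMap_eq_smul_one]

end Spectrum

theorem exists_isUnit_col_zero_eq_fin_two {𝕜 : Type*} [RCLike 𝕜] {v : Fin 2 → 𝕜} (hv : v ≠ 0) :
    ∃ Q : Matrix (Fin 2) (Fin 2) 𝕜, IsUnit Q ∧ Q.col 0 = v := by
  refine ⟨!![v 0, -star (v 1); v 1, star (v 0)], ?_, by ext i; fin_cases i <;> rfl⟩
  have hdet : det !![v 0, -star (v 1); v 1, star (v 0)] = v ⬝ᵥ star v := by
    simp [det_fin_two_of, dotProduct, Fin.sum_univ_two, mul_comm]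
  rw [isUnit_iff_isUnit_det, hdet, isUnit_iff_ne_zero]
  exact mt dotProduct_self_star_eq_zero.1 hv

theorem exists_conj_eq_upper_triangular_fin_two (A : Matrix (Fin 2) (Fin 2) ℂ) :
    ∃ P : Matrix (Fin 2) (Fin 2) ℂ, IsUnit P ∧ ∃ b c d : ℂ, P * A * P⁻¹ = !![b, c; 0, d] := by
  obtain ⟨b, hb⟩ := Module.End.exists_eigenvalue (toLin' A)
  obtain ⟨v, hv, hv0⟩ := hb.exists_hasEigenvector
  rw [Module.End.mem_eigenspace_iff, toLin'_apply] at hv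
  obtain ⟨Q, hQ, hQv⟩ := exists_isUnit_col_zero_eq_fin_two hv0
  have hQdet := (isUnit_iff_isUnit_det Q).1 hQ
  have hcol : (Q⁻¹ * A * Q).col 0 = b • Pi.single 0 1 := by
    rw [← mulVec_single_one] at hQv ⊢
    rw [← mulVec_mulVec, hQv, ← mulVec_mulVec, hv, mulVec_smul, ← hQv, mulVec_mulVec,
      nonsing_inv_mul _ hQdet, one_mulVec]
  have h00 : (Q⁻¹ * A * Q) 0 0 = b := by simpa using congrFun hcol 0
  have h10 : (Q⁻¹ * A * Q) 1 0 = 0 := by simpa using congrFun hcol 1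
  refine ⟨Q⁻¹, isUnit_nonsing_inv_iff.2 hQ, b, (Q⁻¹ * A * Q) 0 1, (Q⁻¹ * A * Q) 1 1, ?_⟩
  rw [nonsing_inv_nonsing_inv _ hQdet]
  conv_lhs => rw [eta_fin_two (Q⁻¹ * A * Q)]
  rw [h00, h10]

theorem exists_conj_eq_upper_triangular_fin_two_of_trace_eq_zero {A : Matrix (Fin 2) (Fin 2) ℂ}
    (hA : A.trace = 0) :
    ∃ P : Matrix (Fin 2) (Fin 2) ℂ, IsUnit P ∧ ∃ b c : ℂ, P * A * P⁻¹ = !![b, c; 0, -b] := by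
  obtain ⟨P, hP, b, c, d, hT⟩ := exists_conj_eq_upper_triangular_fin_two A
  have htr := trace_conj hP A
  rw [hT, hA, trace_fin_two_of] at htr
  exact ⟨P, hP, b, c, by rw [hT, eq_neg_of_add_eq_zero_right htr]⟩

theorem conj_upper_triangular_fin_two {K : Type*} [Field K] {t : K} (ht : t ≠ 0) (b c d : K) :
    !![t, 0; 0, 1] * !![b, c; 0, d] * !![t, 0; 0, 1]⁻¹ = diagonal ![b, d] + t • !![0, c; 0, 0] := by
  rw [inv_def, det_fin_two_of, adjugate_fin_two_of]
  ext i j; fin_cases i <;> fin_cases j <;> simp [ht, mul_comm t]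

theorem l2_opNorm_diagonal_fin_two_neg {𝕜 : Type*} [RCLike 𝕜] (b : 𝕜) :
    ‖(diagonal ![b, -b] : Matrix (Fin 2) (Fin 2) 𝕜)‖ = ‖b‖ := by
  rw [l2_opNorm_diagonal]
  exact le_antisymm ((pi_norm_le_iff_of_nonneg (norm_nonneg _)).2 (by simp [Fin.forall_fin_two]))
    (norm_le_pi_norm ![b, -b] 0)

end Matrix

theorem opNormC_eq_l2_opNorm (M : Matrix (Fin 2) (Fin 2) ℂ) : opNormC M = ‖M‖ := rfl

theorem norm_le_opNormC_conj {A Ω : Matrix (Fin 2) (Fin 2) ℂ} {b : ℂ} (hb : b ∈ spectrum ℂ A)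
    (hΩ : IsUnit Ω) : ‖b‖ ≤ opNormC (Ω * A * Ω⁻¹) := by
  rw [opNormC_eq_l2_opNorm]
  exact spectrum.norm_le_norm_of_mem (by rwa [spectrum_conj hΩ])

/-- For any 2×2 complex matrix `A` with trace zero, the infimum over invertible `Ω`
of `‖Ω A Ω⁻¹‖` equals `√|det A|`. -/
theorem inf_conj_opNorm_eq_sqrt_abs_det (A : Matrix (Fin 2) (Fin 2) ℂ)
    (hA : A.trace = 0) :
    sInf {x : ℝ | ∃ Ω : Matrix (Fin 2) (Fin 2) ℂ, IsUnit Ω ∧ x = opNormC (Ω * A * Ω⁻¹)}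
      = Real.sqrt ‖A.det‖ := by
  obtain ⟨P, hP, b, c, hT⟩ := exists_conj_eq_upper_triangular_fin_two_of_trace_eq_zero hA
  have hdet : Real.sqrt ‖A.det‖ = ‖b‖ := by
    rw [← det_conj hP A, hT, det_fin_two_of, mul_zero, sub_zero, mul_neg, norm_neg, norm_mul,
      Real.sqrt_mul_self (norm_nonneg b)]
  have hb : b ∈ spectrum ℂ A := by
    rw [← spectrum_conj hP, hT]
    exact mem_spectrum_upper_triangular_fin_two b c (-b)
  set S := {x : ℝ | ∃ Ω : Matrix (Fin 2) (Fin 2) ℂ, IsUnit Ω ∧ x = opNormC (Ω * A * Ω⁻¹)}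
  have hlower : ∀ x ∈ S, ‖b‖ ≤ x := by
    rintro x ⟨Ω, hΩ, rfl⟩
    exact norm_le_opNormC_conj hb hΩ
  have hmem : ∀ t : ℂ, t ≠ 0 → ‖diagonal ![b, -b] + t • !![0, c; 0, 0]‖ ∈ S := by
    intro t ht
    refine ⟨!![t, 0; 0, 1] * P, ((isUnit_iff_isUnit_det _).2 (by simpa using ht)).mul hP, ?_⟩
    rw [Matrix.mul_inv_rev, ← conj_upper_triangular_fin_two ht, ← hT]
    simp only [opNormC_eq_l2_opNorm, mul_assoc]
  have hlim : Tendsto (fun t : ℂ => ‖diagonal ![b, -b] + t • !![0, c; 0, 0]‖) (𝓝[≠] 0)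
      (𝓝 ‖b‖) := by
    have hcont : Continuous fun t : ℂ => ‖diagonal ![b, -b] + t • !![0, c; 0, 0]‖ := by fun_prop
    simpa only [zero_smul, add_zero, l2_opNorm_diagonal_fin_two_neg] using
      (hcont.tendsto 0).mono_left nhdsWithin_le_nhds
  rw [hdet]
  exact le_antisymm
    (csInf_le_of_tendsto ⟨‖b‖, hlower⟩ (eventually_nhdsWithin_of_forall (s := {0}ᶜ) hmem) hlim)
    (le_csInf ⟨_, hmem 1 one_ne_zero⟩ hlower)
end

section
/- If P and Q are rank-one orthogonal projections in ℝ² onto unit vectors e and f respectively, and a, b ∈ (0,1], then writing Ω_e = diag(a⁻¹,a)·U_e where U_e is the rotation sending e to (1,0), one has log‖Ω_f Ω_e⁻¹‖ ≤ |log(a/b)| + C·log(1 + ‖P − Q‖/(a b)) for some absolute constant C. -/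
/-!
Put `θ = ψ - φ`. Then `Ω_f Ω_e⁻¹ = diag(b⁻¹, b) U(θ) diag(a, a⁻¹)` with `U(θ) = U_f U_e⁻¹`, and
splitting the rotation as `U(θ) = cos θ · 1 + sin θ · U(π/2)` gives
`Ω_f Ω_e⁻¹ = cos θ · diag(a/b, b/a) + sin θ · diag((ab)⁻¹, ab) U(π/2)`.
Hence `‖Ω_f Ω_e⁻¹‖ ≤ max(a/b, b/a) + |sin θ|/(ab)`, while testing `P - Q` on `f` gives
`|sin θ| ≤ ‖P - Q‖`. As `max(a/b, b/a) = exp |log(a/b)| ≥ 1`, the right-hand side is at most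
`exp |log(a/b)| · (1 + ‖P - Q‖/(ab))`, which is the claim with `C = 1`.
-/

/-- Operator norm (on `ℓ²`) of a 2×2 real matrix. -/
noncomputable def opNormR (A : Matrix (Fin 2) (Fin 2) ℝ) : ℝ :=
  ‖Matrix.toEuclideanCLM (𝕜 := ℝ) (n := Fin 2) A‖

/-- The rotation matrix sending the unit vector of angle `φ` to `(1,0)`. -/
noncomputable def rotTo (φ : ℝ) : Matrix (Fin 2) (Fin 2) ℝ :=
  !![Real.cos φ, Real.sin φ; -Real.sin φ, Real.cos φ]

/-- `Ω = diag(a⁻¹, a) · U_φ`. -/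
noncomputable def omegaMat (a φ : ℝ) : Matrix (Fin 2) (Fin 2) ℝ :=
  !![a⁻¹, 0; 0, a] * rotTo φ

/-- The rank-one orthogonal projection onto the unit vector of angle `φ`. -/
noncomputable def projMat (φ : ℝ) : Matrix (Fin 2) (Fin 2) ℝ :=
  Matrix.vecMulVec ![Real.cos φ, Real.sin φ] ![Real.cos φ, Real.sin φ]

open Real Matrix
open scoped Matrix.Norms.L2Operator

lemma opNormR_eq_norm (A : Matrix (Fin 2) (Fin 2) ℝ) : opNormR A = ‖A‖ := rfl

lemma rotTo_mul_rotTo (x y : ℝ) : rotTo x * rotTo y = rotTo (x + y) := by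
  ext i j
  fin_cases i <;> fin_cases j <;>
    simp [rotTo, Matrix.mul_apply, cos_add, sin_add] <;> ring

lemma rotTo_zero : rotTo 0 = 1 := by
  ext i j
  fin_cases i <;> fin_cases j <;> simp [rotTo]

lemma star_rotTo (x : ℝ) : star (rotTo x) = rotTo (-x) := by
  ext i j
  fin_cases i <;> fin_cases j <;> simp [rotTo]

lemma rotTo_inv (x : ℝ) : (rotTo x)⁻¹ = rotTo (-x) :=
  inv_eq_left_inv (by rw [rotTo_mul_rotTo, neg_add_cancel, rotTo_zero])

lemma norm_rotTo (x : ℝ) : ‖rotTo x‖ = 1 :=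
  CStarRing.norm_of_mem_unitary <| Unitary.mem_iff.2
    ⟨by rw [star_rotTo, rotTo_mul_rotTo, neg_add_cancel, rotTo_zero],
     by rw [star_rotTo, rotTo_mul_rotTo, add_neg_cancel, rotTo_zero]⟩

lemma omegaMat_inv {a : ℝ} (ha : a ≠ 0) (φ : ℝ) :
    (omegaMat a φ)⁻¹ = rotTo (-φ) * !![a, 0; 0, a⁻¹] := by
  rw [omegaMat, Matrix.mul_inv_rev, rotTo_inv]
  congr
  refine inv_eq_left_inv ?_
  ext i j
  fin_cases i <;> fin_cases j <;> simp [ha]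

lemma omegaMat_mul_omegaMat_inv {a b : ℝ} (ha : a ≠ 0) (hb : b ≠ 0) (φ ψ : ℝ) :
    omegaMat b ψ * (omegaMat a φ)⁻¹ =
      cos (ψ - φ) • diagonal ![a / b, b / a]
        + sin (ψ - φ) • (diagonal ![(a * b)⁻¹, a * b] * rotTo (π / 2)) := by
  rw [omegaMat_inv ha]
  ext i j
  fin_cases i <;> fin_cases j <;>
    simp [omegaMat, rotTo, Matrix.mul_apply, cos_sub, sin_sub] <;>
    field_simp <;> ring

lemma norm_diagonal_vec2_le {x y K : ℝ} (hx : |x| ≤ K) (hy : |y| ≤ K) :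
    ‖diagonal ![x, y]‖ ≤ K := by
  rw [l2_opNorm_diagonal, pi_norm_le_iff_of_nonneg ((abs_nonneg x).trans hx)]
  simpa [Fin.forall_fin_two] using ⟨hx, hy⟩

lemma abs_sin_sub_le_norm_projMat_sub (φ ψ : ℝ) :
    |sin (ψ - φ)| ≤ ‖projMat φ - projMat ψ‖ := by
  have hf : ‖WithLp.toLp 2 ![cos ψ, sin ψ]‖ = 1 := by
    simp [EuclideanSpace.norm_eq, Fin.sum_univ_two]
  have hPQf : (projMat φ - projMat ψ) *ᵥ ![cos ψ, sin ψ]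
      = sin (ψ - φ) • ![sin φ, -cos φ] := by
    ext i
    fin_cases i <;> simp [projMat, Matrix.mulVec, dotProduct, Fin.sum_univ_two, sin_sub]
    · linear_combination cos ψ * (sin_sq_add_cos_sq φ - sin_sq_add_cos_sq ψ)
    · linear_combination sin ψ * (sin_sq_add_cos_sq φ - sin_sq_add_cos_sq ψ)
  have hle := l2_opNorm_mulVec (projMat φ - projMat ψ) (WithLp.toLp 2 ![cos ψ, sin ψ])
  rw [WithLp.ofLp_toLp, hPQf, hf, mul_one] at hle
  simpa [EuclideanSpace.norm_eq, Fin.sum_univ_two, mul_pow, ← mul_add, sqrt_sq_eq_abs] using hle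

lemma Real.le_exp_abs_log {x : ℝ} (hx : 0 < x) : x ≤ exp |log x| :=
  (exp_log hx).symm.le.trans (exp_le_exp.2 (le_abs_self _))

lemma norm_omegaMat_mul_omegaMat_inv_le {a b : ℝ} (ha : 0 < a) (hb : 0 < b) (hab : a * b ≤ 1)
    (φ ψ : ℝ) :
    ‖omegaMat b ψ * (omegaMat a φ)⁻¹‖
      ≤ exp |log (a / b)| + ‖projMat φ - projMat ψ‖ / (a * b) := by
  have hab₀ : 0 < a * b := mul_pos ha hb
  have hD : ‖diagonal ![a / b, b / a]‖ ≤ exp |log (a / b)| := by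
    refine norm_diagonal_vec2_le ?_ ?_
    · rw [abs_of_pos (by positivity)]
      exact le_exp_abs_log (by positivity)
    · rw [abs_of_pos (by positivity), ← abs_neg, ← log_inv, inv_div]
      exact le_exp_abs_log (by positivity)
  have hN : ‖diagonal ![(a * b)⁻¹, a * b] * rotTo (π / 2)‖ ≤ (a * b)⁻¹ := by
    refine (norm_mul_le _ _).trans ?_
    rw [norm_rotTo, mul_one]
    refine norm_diagonal_vec2_le (abs_of_pos (by positivity)).le ?_
    rw [abs_of_pos hab₀]
    exact hab.trans (one_le_inv₀ hab₀ |>.2 hab)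
  rw [omegaMat_mul_omegaMat_inv ha.ne' hb.ne']
  calc _ ≤ |cos (ψ - φ)| * ‖diagonal ![a / b, b / a]‖
        + |sin (ψ - φ)| * ‖diagonal ![(a * b)⁻¹, a * b] * rotTo (π / 2)‖ := by
        refine (norm_add_le _ _).trans ?_
        rw [norm_smul, norm_smul, Real.norm_eq_abs, Real.norm_eq_abs]
    _ ≤ 1 * exp |log (a / b)| + ‖projMat φ - projMat ψ‖ * (a * b)⁻¹ := by
        gcongr
        · exact abs_cos_le_one _
        · exact abs_sin_sub_le_norm_projMat_sub φ ψ
    _ = _ := by ring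

lemma Real.log_le_add_log_one_add {x u t : ℝ} (hx : 0 ≤ x) (hu : 0 ≤ u) (ht : 0 ≤ t)
    (h : x ≤ exp u + t) : log x ≤ u + log (1 + t) := by
  rcases hx.eq_or_lt with rfl | hx
  · rw [log_zero]
    have := log_nonneg (le_add_of_nonneg_right ht)
    linarith
  rw [log_le_iff_le_exp hx, exp_add, exp_log (by linarith)]
  nlinarith [one_le_exp hu]

/-- If `P, Q` are rank-one orthogonal projections onto unit vectors `e = (cos φ, sin φ)`,
`f = (cos ψ, sin ψ)` and `a, b ∈ (0,1]`, then, with `Ω_e = diag(a⁻¹,a) U_e` where `U_e`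
is the rotation sending `e` to `(1,0)`,
`log ‖Ω_f Ω_e⁻¹‖ ≤ |log (a/b)| + C · log (1 + ‖P − Q‖/(a b))` for an absolute constant `C`. -/
theorem log_opNorm_omega_conj_bound :
    ∃ C : ℝ, 0 < C ∧ ∀ φ ψ a b : ℝ, 0 < a → a ≤ 1 → 0 < b → b ≤ 1 →
      Real.log (opNormR (omegaMat b ψ * (omegaMat a φ)⁻¹))
        ≤ |Real.log (a / b)|
          + C * Real.log (1 + opNormR (projMat φ - projMat ψ) / (a * b)) := by
  refine ⟨1, one_pos, fun φ ψ a b ha ha1 hb hb1 => ?_⟩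
  rw [one_mul, opNormR_eq_norm, opNormR_eq_norm]
  exact Real.log_le_add_log_one_add (norm_nonneg _) (abs_nonneg _) (by positivity)
    (norm_omegaMat_mul_omegaMat_inv_le ha hb (mul_le_one₀ ha1 hb.le hb1) φ ψ)
end

section
/- Let (δ_j) be a monotone decreasing sequence of positive reals, ρ > 0, and suppose that for all sufficiently large j, δ_{2j} · ∏_{n=2}^{2j−1} δ_n² ≤ (C/j)^{4j/ρ} for some constant C > 0. Then δ_{2j} = O(j^{−1/ρ}) as j → ∞. -/
/-!
Monotonicity bounds every factor of the product from below by `δ (2j)`, so the hypothesis gives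
`δ (2j) ^ (4j - 3) ≤ (C / j) ^ (4j / ρ)`. Once `j ≥ C` the base `C / j` is at most `1`, so the
exponent may be lowered to `(4j - 3) / ρ`, and taking `(4j - 3)`-th roots leaves
`δ (2j) ≤ (C / j) ^ (1 / ρ) = C ^ (1 / ρ) j ^ (-1 / ρ)`.
-/

theorem Finset.pow_two_mul_card_le_prod_sq {ι : Type*} {s : Finset ι} {f : ι → ℝ} {b : ℝ}
    (hb : 0 ≤ b) (h : ∀ i ∈ s, b ≤ f i) :
    b ^ (2 * s.card) ≤ ∏ i ∈ s, f i ^ 2 := by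
  rw [pow_mul, ← Finset.prod_const]
  exact Finset.prod_le_prod (fun _ _ => sq_nonneg b) fun i hi => pow_le_pow_left₀ hb (h i hi) 2

theorem pow_le_mul_prod_Icc_sq {δ : ℕ → ℝ} {k : ℕ} (hk : 2 ≤ k) (hδk : 0 ≤ δ k)
    (hle : ∀ n ∈ Finset.Icc 2 (k - 1), δ k ≤ δ n) :
    δ k ^ (2 * k - 3) ≤ δ k * ∏ n ∈ Finset.Icc 2 (k - 1), δ n ^ 2 := by
  have hcard : (Finset.Icc 2 (k - 1)).card = k - 2 := by rw [Nat.card_Icc]; omega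
  calc δ k ^ (2 * k - 3) = δ k * δ k ^ (2 * (Finset.Icc 2 (k - 1)).card) := by
        rw [hcard, ← pow_succ']; congr 1; omega
    _ ≤ δ k * ∏ n ∈ Finset.Icc 2 (k - 1), δ n ^ 2 :=
        mul_le_mul_of_nonneg_left (Finset.pow_two_mul_card_le_prod_sq hδk hle) hδk

theorem Real.le_rpow_one_div_of_pow_le_rpow_div {b x ρ e : ℝ} {m : ℕ} (hb : 0 ≤ b) (hx₀ : 0 ≤ x)
    (hx₁ : x ≤ 1) (hρ : 0 < ρ) (hm : m ≠ 0) (hme : (m : ℝ) ≤ e) (h : b ^ m ≤ x ^ (e / ρ)) :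
    b ≤ x ^ (1 / ρ) := by
  have hlower : x ^ (e / ρ) ≤ (x ^ (1 / ρ)) ^ m := by
    rw [← Real.rpow_natCast, ← Real.rpow_mul hx₀, one_div_mul_eq_div]
    exact Real.rpow_le_rpow_of_exponent_ge' hx₀ hx₁ (by positivity) (by gcongr)
  exact (pow_le_pow_iff_left₀ hb (Real.rpow_nonneg hx₀ _) hm).1 (h.trans hlower)

/-- If `(δ_j)_{j≥2}` is a decreasing sequence of positive reals, `ρ, C > 0`, and for all
large `j` one has `δ_{2j} ∏_{n=2}^{2j−1} δ_n² ≤ (C/j)^{4j/ρ}`, then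
`δ_{2j} = O(j^{−1/ρ})` as `j → ∞`. -/
theorem delta_two_j_bigO (δ : ℕ → ℝ) (hpos : ∀ j, 2 ≤ j → 0 < δ j)
    (hmono : ∀ j k, 2 ≤ j → j ≤ k → δ k ≤ δ j)
    (ρ C : ℝ) (hρ : 0 < ρ) (hC : 0 < C)
    (hbound : ∃ J : ℕ, ∀ j : ℕ, J ≤ j →
      δ (2 * j) * ∏ n ∈ Finset.Icc 2 (2 * j - 1), (δ n) ^ 2
        ≤ (C / (j : ℝ)) ^ ((4 * (j : ℝ)) / ρ)) :
    ∃ K : ℝ, 0 < K ∧ ∃ N : ℕ, ∀ j : ℕ, N ≤ j →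
      δ (2 * j) ≤ K * (j : ℝ) ^ (-(1 / ρ)) := by
  obtain ⟨J, hJ⟩ := hbound
  refine ⟨C ^ (1 / ρ), Real.rpow_pos_of_pos hC _, max J (max 1 ⌈C⌉₊), fun j hj => ?_⟩
  simp only [max_le_iff] at hj
  obtain ⟨hJj, hj₁, hCj⟩ := hj
  have hj₀ : (0 : ℝ) ≤ j := j.cast_nonneg
  have hδ : 0 ≤ δ (2 * j) := (hpos _ (by omega)).le
  have hpow : δ (2 * j) ^ (2 * (2 * j) - 3) ≤ (C / j) ^ (4 * (j : ℝ) / ρ) :=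
    (pow_le_mul_prod_Icc_sq (by omega) hδ fun n hn => by
      obtain ⟨h2n, hnj⟩ := Finset.mem_Icc.1 hn
      exact hmono n _ h2n (by omega)).trans (hJ j hJj)
  have hexp : ((2 * (2 * j) - 3 : ℕ) : ℝ) ≤ 4 * j := by
    rw [Nat.cast_sub (by omega)]; push_cast; linarith
  calc δ (2 * j) ≤ (C / j) ^ (1 / ρ) :=
        Real.le_rpow_one_div_of_pow_le_rpow_div hδ (by positivity)
          (div_le_one_of_le₀ (Nat.ceil_le.1 hCj) hj₀) hρ (by omega) hexp hpow
    _ = C ^ (1 / ρ) * (j : ℝ) ^ (-(1 / ρ)) := by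
        rw [Real.div_rpow hC.le hj₀, Real.rpow_neg hj₀, div_eq_mul_inv]
end

section
/- Suppose a sequence of positive reals (ρ_j) satisfies ρ_{j−1}·ρ_{j+1} ≤ ρ_j² for all large j and ρ_j → ∞. Then the sequence ρ_{j−1}/ρ_j is eventually monotone with limit at most 1, and the quantities δ_{j+1} = ( (ρ_{j−1}·ρ_{j−3}···)/(ρ_j·ρ_{j−2}···) )² satisfy δ_j = O(ρ_{j−1}^{−1}). -/
/-!
Log-concavity says exactly that the ratios `r j = ρ (j-1) / ρ j` increase, and they cannot
exceed `1` since otherwise `ρ` would eventually decrease; so they converge to a limit `≤ 1`.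
For `δ`, the scaled quantities `e j = δ j * ρ (j-1)` satisfy `e (j+1) * e j = r j`.
Since `r` increases, `e j ≤ e (j+2)`, so `e` is bounded below by some `m > 0`, and then
`e j ≤ r (j-1) / e (j-1) ≤ 1 / m`, i.e. `δ j ≤ m⁻¹ / ρ (j-1)`.
-/

open Filter Topology

lemma div_le_div_of_mul_le_sq {a b c : ℝ} (hb : 0 < b) (hc : 0 < c) (h : a * c ≤ b ^ 2) :
    a / b ≤ b / c := by
  rw [div_le_div_iff₀ hb hc]
  simpa [sq] using h

lemma exists_tendsto_le_of_le_succ {f : ℕ → ℝ} {N : ℕ} {c : ℝ}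
    (hmono : ∀ n ≥ N, f n ≤ f (n + 1)) (hbdd : ∀ n ≥ N, f n ≤ c) :
    ∃ l ≤ c, Tendsto f atTop (𝓝 l) := by
  have hshift := tendsto_atTop_ciSup (monotone_add_nat_of_le_succ hmono)
    ⟨c, by rintro _ ⟨n, rfl⟩; exact hbdd _ (Nat.le_add_left N n)⟩
  exact ⟨_, ciSup_le fun n => hbdd _ (Nat.le_add_left N n),
    (tendsto_add_atTop_iff_nat N).1 hshift⟩

lemma exists_pos_le_of_le_add_two {f : ℕ → ℝ} {N : ℕ} (h₀ : 0 < f N) (h₁ : 0 < f (N + 1))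
    (hf : ∀ n ≥ N, f n ≤ f (n + 2)) : ∃ m, 0 < m ∧ ∀ n ≥ N, m ≤ f n := by
  refine ⟨min (f N) (f (N + 1)), lt_min h₀ h₁, fun n hn => ?_⟩
  suffices ∀ n ≥ N, min (f N) (f (N + 1)) ≤ f n ∧ min (f N) (f (N + 1)) ≤ f (n + 1) from
    (this n hn).1
  intro n hn
  induction n, hn using Nat.le_induction with
  | base => exact ⟨min_le_left _ _, min_le_right _ _⟩
  | succ n hn ih => exact ⟨ih.2, ih.1.trans (hf n hn)⟩

section LogConcave

variable {ρ : ℕ → ℝ} {N : ℕ}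

lemma ratio_le_ratio_succ (hpos : ∀ j, 1 ≤ j → 0 < ρ j) (hN : 1 ≤ N)
    (hlc : ∀ j, N ≤ j → ρ (j - 1) * ρ (j + 1) ≤ ρ j ^ 2) :
    ∀ j ≥ N, ρ (j - 1) / ρ j ≤ ρ (j + 1 - 1) / ρ (j + 1) := fun j hj => by
  rw [Nat.add_sub_cancel]
  exact div_le_div_of_mul_le_sq (hpos j (by omega)) (hpos (j + 1) (by omega)) (hlc j hj)

lemma ratio_le_one_of_tendsto_atTop (hpos : ∀ j, 1 ≤ j → 0 < ρ j)
    (hmono : ∀ j ≥ N, ρ (j - 1) / ρ j ≤ ρ (j + 1 - 1) / ρ (j + 1))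
    (htop : Tendsto ρ atTop atTop) : ∀ j ≥ N, ρ (j - 1) / ρ j ≤ 1 := by
  intro j hj
  by_contra! hgt
  have hanti : AntitoneOn ρ {n | j ≤ n} := antitoneOn_nat_Ici_of_succ_le fun n hn => by
    have hr : 1 < ρ n / ρ (n + 1) := by
      simpa using hgt.trans_le
        (monotoneOn_nat_Ici_of_le_succ hmono (hj : N ≤ j) (show N ≤ n + 1 by omega) (by omega))
    exact ((one_lt_div (hpos _ (by omega))).1 hr).le
  obtain ⟨k, hk, hjk⟩ := ((htop.eventually_gt_atTop (ρ j)).and (eventually_ge_atTop j)).exists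
  exact (hanti (le_refl j) hjk hjk).not_gt hk

end LogConcave

section Delta

variable {ρ δ : ℕ → ℝ} {N : ℕ}

lemma delta_pos (hpos : ∀ j, 1 ≤ j → 0 < ρ j) (hδ1 : δ 1 = 1)
    (hδrec : ∀ j, 1 ≤ j → δ (j + 1) = 1 / (ρ j ^ 2 * δ j)) : ∀ j, 1 ≤ j → 0 < δ j := by
  intro j hj
  induction j, hj using Nat.le_induction with
  | base => rw [hδ1]; exact one_pos
  | succ j hj ih =>
    have := hpos j hj
    rw [hδrec j hj]
    positivity

lemma scaled_delta_succ_mul (hpos : ∀ j, 1 ≤ j → 0 < ρ j) (hδpos : ∀ j, 1 ≤ j → 0 < δ j)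
    (hδrec : ∀ j, 1 ≤ j → δ (j + 1) = 1 / (ρ j ^ 2 * δ j)) {j : ℕ} (hj : 1 ≤ j) :
    δ (j + 1) * ρ j * (δ j * ρ (j - 1)) = ρ (j - 1) / ρ j := by
  have := (hpos j hj).ne'
  have := (hδpos j hj).ne'
  rw [hδrec j hj]
  field_simp

lemma delta_le_div_of_ratio_le_one (hpos : ∀ j, 1 ≤ j → 0 < ρ j) (hN : 2 ≤ N)
    (hmono : ∀ j ≥ N, ρ (j - 1) / ρ j ≤ ρ (j + 1 - 1) / ρ (j + 1))
    (hle : ∀ j ≥ N, ρ (j - 1) / ρ j ≤ 1) (hδpos : ∀ j, 1 ≤ j → 0 < δ j)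
    (hδrec : ∀ j, 1 ≤ j → δ (j + 1) = 1 / (ρ j ^ 2 * δ j)) :
    ∃ K : ℝ, 0 < K ∧ ∃ N : ℕ, ∀ j, N ≤ j → δ j ≤ K / ρ (j - 1) := by
  set e : ℕ → ℝ := fun j => δ j * ρ (j - 1)
  have he_pos : ∀ j ≥ N, 0 < e j := fun j hj =>
    mul_pos (hδpos j (by omega)) (hpos (j - 1) (by omega))
  have he_mul : ∀ j ≥ N, e (j + 1) * e j = ρ (j - 1) / ρ j := fun j hj => by
    simpa [e] using scaled_delta_succ_mul hpos hδpos hδrec (by omega : 1 ≤ j)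
  have he_step : ∀ j ≥ N, e j ≤ e (j + 2) := fun j hj => by
    refine le_of_mul_le_mul_right ?_ (he_pos (j + 1) (by omega))
    rw [mul_comm, he_mul j hj, he_mul (j + 1) (by omega)]
    exact hmono j hj
  obtain ⟨m, hm, hlow⟩ :=
    exists_pos_le_of_le_add_two (he_pos N le_rfl) (he_pos (N + 1) (by omega)) he_step
  refine ⟨1 / m, one_div_pos.2 hm, N + 1, fun j hj => ?_⟩
  obtain ⟨i, rfl⟩ : ∃ i, j = i + 1 := ⟨j - 1, by omega⟩
  have hi : N ≤ i := by omega
  rw [Nat.add_sub_cancel, le_div_iff₀ (hpos i (by omega)), le_div_iff₀ hm]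
  calc δ (i + 1) * ρ i * m ≤ e (i + 1) * e i :=
        mul_le_mul_of_nonneg_left (hlow i hi) (he_pos (i + 1) (by omega)).le
    _ = ρ (i - 1) / ρ i := he_mul i hi
    _ ≤ 1 := hle i hi

end Delta

/-- Suppose `(ρ_j)` is positive, `ρ_{j−1} ρ_{j+1} ≤ ρ_j²` for all large `j`, and
`ρ_j → ∞`.  Then the ratios `ρ_{j−1}/ρ_j` are eventually monotone with a limit `≤ 1`,
and the quantities `δ_{j+1} = ((ρ_{j−1} ρ_{j−3} ⋯)/(ρ_j ρ_{j−2} ⋯))²` (equivalently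
`δ_1 = 1`, `δ_{j+1} = 1/(ρ_j² δ_j)`) satisfy `δ_j = O(ρ_{j−1}⁻¹)`. -/
theorem ratio_eventually_monotone_and_delta_bigO
    (ρ : ℕ → ℝ) (hpos : ∀ j, 1 ≤ j → 0 < ρ j)
    (hlc : ∃ N : ℕ, 2 ≤ N ∧ ∀ j, N ≤ j → ρ (j - 1) * ρ (j + 1) ≤ ρ j ^ 2)
    (htop : Tendsto (fun j => ρ j) atTop atTop)
    (δ : ℕ → ℝ) (hδ1 : δ 1 = 1)
    (hδrec : ∀ j, 1 ≤ j → δ (j + 1) = 1 / (ρ j ^ 2 * δ j)) :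
    (∃ M : ℕ, 1 ≤ M ∧
      ((∀ m n, M ≤ m → m ≤ n → ρ (m - 1) / ρ m ≤ ρ (n - 1) / ρ n) ∨
       (∀ m n, M ≤ m → m ≤ n → ρ (n - 1) / ρ n ≤ ρ (m - 1) / ρ m))) ∧
    (∃ l : ℝ, l ≤ 1 ∧
      Tendsto (fun j => ρ (j - 1) / ρ j) atTop (nhds l)) ∧
    (∃ K : ℝ, 0 < K ∧ ∃ N : ℕ, ∀ j, N ≤ j → δ j ≤ K / ρ (j - 1)) := by
  obtain ⟨N, hN, hlc⟩ := hlc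
  have hmono := ratio_le_ratio_succ hpos (by omega) hlc
  have hle := ratio_le_one_of_tendsto_atTop hpos hmono htop
  refine ⟨⟨N, by omega, Or.inl fun m n hm hmn => ?_⟩,
    exists_tendsto_le_of_le_succ (f := fun j => ρ (j - 1) / ρ j) hmono hle,
    delta_le_div_of_ratio_le_one hpos hN hmono hle (delta_pos hpos hδ1 hδrec) hδrec⟩
  exact monotoneOn_nat_Ici_of_le_succ (f := fun j => ρ (j - 1) / ρ j) hmono hm (hm.trans hmn) hmn
end

section
/- Let (M_j(λ))_{j≥1} be 2×2 matrices of the form M_j(λ) = I + λ A_j with ‖A_j‖ ≤ δ_j, where ∑ δ_j^d < ∞ for some d ∈ (0,1). Then there is a constant K > 0 such that for all λ ∈ ℂ, ‖∏_{j=1}^{n} M_j(λ)‖ ≤ exp(K(1 + |λ|^d)) uniformly in n. -/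
namespace Real

theorem log_one_add_le_rpow_div {x d : ℝ} (hx : 0 ≤ x) (hd0 : 0 < d) (hd1 : d ≤ 1) :
    log (1 + x) ≤ x ^ d / d := by
  rw [le_div_iff₀ hd0, mul_comm, ← log_rpow (by positivity)]
  calc log ((1 + x) ^ d) ≤ (1 + x) ^ d - 1 := log_le_sub_one_of_pos (by positivity)
    _ ≤ 1 ^ d + x ^ d - 1 := by gcongr; exact rpow_add_le_add_rpow zero_le_one hx hd0.le hd1
    _ = x ^ d := by rw [one_rpow]; ring

theorem one_add_le_exp_rpow_div {x d : ℝ} (hx : 0 ≤ x) (hd0 : 0 < d) (hd1 : d ≤ 1) :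
    1 + x ≤ exp (x ^ d / d) := by
  rw [← log_le_iff_le_exp (by positivity)]
  exact log_one_add_le_rpow_div hx hd0 hd1

end Real

section NormedAlgebra

variable {𝕜 R : Type*} [NormedField 𝕜] [NormedRing R] [NormOneClass R] [NormedAlgebra 𝕜 R]

theorem norm_one_add_smul_le_exp (z : 𝕜) (a : R) {d : ℝ} (hd0 : 0 < d) (hd1 : d ≤ 1) :
    ‖1 + z • a‖ ≤ Real.exp (‖z‖ ^ d / d * ‖a‖ ^ d) := by
  calc ‖1 + z • a‖ ≤ 1 + ‖z‖ * ‖a‖ := by grw [norm_add_le, norm_one, norm_smul_le]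
    _ ≤ Real.exp ((‖z‖ * ‖a‖) ^ d / d) :=
      Real.one_add_le_exp_rpow_div (by positivity) hd0 hd1
    _ = Real.exp (‖z‖ ^ d / d * ‖a‖ ^ d) := by
      rw [Real.mul_rpow (norm_nonneg z) (norm_nonneg a)]; ring_nf

theorem norm_list_prod_one_add_smul_le_exp {ι : Type*} (z : 𝕜) (f : ι → R) (l : List ι)
    {d : ℝ} (hd0 : 0 < d) (hd1 : d ≤ 1) :
    ‖(l.map fun i => 1 + z • f i).prod‖ ≤
      Real.exp (‖z‖ ^ d / d * (l.map fun i => ‖f i‖ ^ d).sum) := by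
  induction l with
  | nil => simp
  | cons i l ih =>
    rw [List.map_cons, List.prod_cons, List.map_cons, List.sum_cons, mul_add, Real.exp_add]
    exact (norm_mul_le _ _).trans
      (mul_le_mul (norm_one_add_smul_le_exp z (f i) hd0 hd1) ih (norm_nonneg _) (Real.exp_nonneg _))

end NormedAlgebra

theorem prod_one_add_smul_norm_le_general (A : ℕ → Matrix (Fin 2) (Fin 2) ℂ) (δ : ℕ → ℝ)
    (hA : ∀ j, 1 ≤ j → opNormC (A j) ≤ δ j)
    (d : ℝ) (hd0 : 0 < d) (hd1 : d < 1)
    (hsum : Summable fun j => δ (j + 1) ^ d) :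
    ∃ K : ℝ, 0 < K ∧ ∀ (z : ℂ) (n : ℕ),
      opNormC (((List.range n).map fun j => (1 : Matrix (Fin 2) (Fin 2) ℂ) + z • A (j + 1))).prod
        ≤ Real.exp (K * (1 + ‖z‖ ^ d)) := by
  set T := fun j => Matrix.toEuclideanCLM (𝕜 := ℂ) (n := Fin 2) (A (j + 1))
  set S := ∑' j, δ (j + 1) ^ d
  have hT : ∀ j, ‖T j‖ ^ d ≤ δ (j + 1) ^ d := fun j =>
    Real.rpow_le_rpow (norm_nonneg _) (hA (j + 1) (Nat.le_add_left 1 j)) hd0.le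
  have hT_nonneg : ∀ j, 0 ≤ δ (j + 1) ^ d := fun j =>
    (Real.rpow_nonneg (norm_nonneg (T j)) d).trans (hT j)
  have hS : 0 ≤ S := tsum_nonneg hT_nonneg
  refine ⟨(S + 1) / d, by positivity, fun z n => ?_⟩
  have hpartial : ((List.range n).map fun j => ‖T j‖ ^ d).sum ≤ S := by
    rw [← List.sum_toFinset _ List.nodup_range, List.toFinset_range]
    exact (Finset.sum_le_sum fun j _ => hT j).trans (hsum.sum_le_tsum _ fun j _ => hT_nonneg j)
  unfold opNormC
  rw [map_list_prod, List.map_map]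
  refine (le_of_eq_of_le (by simp [T, Function.comp_def])
    (norm_list_prod_one_add_smul_le_exp z T (List.range n) hd0 hd1.le)).trans
    (Real.exp_le_exp.mpr ?_)
  have hz : 0 ≤ ‖z‖ ^ d := by positivity
  calc ‖z‖ ^ d / d * ((List.range n).map fun j => ‖T j‖ ^ d).sum
      ≤ ‖z‖ ^ d / d * S := by gcongr
    _ ≤ (S + 1) / d * (1 + ‖z‖ ^ d) := by
      rw [div_mul_eq_mul_div, div_mul_eq_mul_div]
      exact div_le_div_of_nonneg_right (by nlinarith) hd0.le

/-- If `M_j(λ) = I + λ A_j` with `‖A_j‖ ≤ δ_j` and `∑ δ_j^d < ∞` for some `d ∈ (0,1)`,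
then `‖∏_{j=1}^n M_j(λ)‖ ≤ exp (K (1 + |λ|^d))` uniformly in `n`, for some `K > 0`. -/
theorem prod_one_add_smul_norm_le (A : ℕ → Matrix (Fin 2) (Fin 2) ℂ) (δ : ℕ → ℝ)
    (hδpos : ∀ j, 1 ≤ j → 0 < δ j) (hA : ∀ j, 1 ≤ j → opNormC (A j) ≤ δ j)
    (d : ℝ) (hd0 : 0 < d) (hd1 : d < 1)
    (hsum : Summable fun j => δ (j + 1) ^ d) :
    ∃ K : ℝ, 0 < K ∧ ∀ (z : ℂ) (n : ℕ),
      opNormC (((List.range n).map fun j => (1 : Matrix (Fin 2) (Fin 2) ℂ) + z • A (j + 1))).prod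
        ≤ Real.exp (K * (1 + ‖z‖ ^ d)) :=
  prod_one_add_smul_norm_le_general A δ hA d hd0 hd1 hsum
end

section
/- With J, H₁, H₂ as above, set M_j(λ) = I + λ δ_{j+1}·[[0,0],[−1,0]] for j odd and M_j(λ) = I + λ δ_{j+1}·[[0,1],[0,0]] for j even, where δ_j > 0. Then the product M_{2j−2}(λ)···M_2(λ)M_1(λ) is a matrix polynomial in λ whose (1,1) entry has degree 2j−2 with leading coefficient (−1)^{j+1} δ_{2j−1} δ_{2j−2} ··· δ_2. -/
/-!
Multiplying a matrix `P` on the left by a pair `U(a) L(b)` of unipotent factors, with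
`L(b) = [[1, 0], [bλ, 1]]` and `U(a) = [[1, aλ], [0, 1]]`, replaces the first column
`(p, q)` of `P` by `(p + aλ(bλp + q), bλp + q)`. If both entries have degree at most `n`,
the new `(1,1)` entry has degree at most `n + 2` with `λ^(n+2)`-coefficient `ab` times the
`λ^n`-coefficient of `p`. Each pair `M_{2i} M_{2i-1}` has `ab = -δ_{2i+1} δ_{2i}`, and induction
on the number of pairs gives the claim.
-/

open Polynomial

section DescProd

variable {α : Type*} [Monoid α] (f : ℕ → α)

/-- `descProd f m = f m * f (m - 1) * ⋯ * f 1`; the factor `f 0` never occurs. -/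
def descProd (m : ℕ) : α :=
  ((List.range m).map fun i => f (m - i)).prod

theorem descProd_zero : descProd f 0 = 1 := rfl

theorem descProd_succ (m : ℕ) : descProd f (m + 1) = f (m + 1) * descProd f m := by
  simp [descProd, List.range_succ_eq_map, Function.comp_def]

end DescProd

section Monodromy

variable {R : Type*} [CommRing R]

theorem natDegree_C_mul_X_mul_add_le {p q : R[X]} {n : ℕ} (a : R)
    (hp : p.natDegree ≤ n) (hq : q.natDegree ≤ n + 1) :
    (C a * X * p + q).natDegree ≤ n + 1 := by
  refine natDegree_add_le_of_degree_le (natDegree_mul_le.trans ?_) hq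
  have := (natDegree_C_mul_le a X).trans natDegree_X_le
  omega

theorem coeff_C_mul_X_mul_add_succ {p q : R[X]} {n : ℕ} (a : R) (hq : q.natDegree ≤ n) :
    (C a * X * p + q).coeff (n + 1) = a * p.coeff n := by
  rw [coeff_add, coeff_eq_zero_of_natDegree_lt (Nat.lt_succ_of_le hq), add_zero, mul_assoc,
    coeff_C_mul, coeff_X_mul]

theorem unipotent_pair_mul_apply_zero_zero (a b : R) (P : Matrix (Fin 2) (Fin 2) R) :
    (!![1, a; 0, 1] * (!![1, 0; b, 1] * P)) 0 0 = a * (b * P 0 0 + P 1 0) + P 0 0 := by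
  simp [Matrix.mul_apply, Fin.sum_univ_two, Matrix.vecMul, dotProduct]
  ring

theorem unipotent_pair_mul_apply_one_zero (a b : R) (P : Matrix (Fin 2) (Fin 2) R) :
    (!![1, a; 0, 1] * (!![1, 0; b, 1] * P)) 1 0 = b * P 0 0 + P 1 0 := by
  simp [Matrix.mul_apply, Fin.sum_univ_two, Matrix.vecMul, dotProduct]

noncomputable def monodromyFactor (c : ℕ → R) (k : ℕ) : Matrix (Fin 2) (Fin 2) R[X] :=
  1 + (C (c (k + 1)) * X) • (if Odd k then !![0, 0; -1, 0] else !![0, 1; 0, 0])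

variable (c : ℕ → R)

theorem monodromyFactor_of_odd {k : ℕ} (hk : Odd k) :
    monodromyFactor c k = !![1, 0; C (-c (k + 1)) * X, 1] := by
  ext i j
  fin_cases i <;> fin_cases j <;> simp [monodromyFactor, hk]

theorem monodromyFactor_of_even {k : ℕ} (hk : Even k) :
    monodromyFactor c k = !![1, C (c (k + 1)) * X; 0, 1] := by
  ext i j
  fin_cases i <;> fin_cases j <;> simp [monodromyFactor, Nat.not_odd_iff_even.2 hk]

theorem descProd_monodromyFactor_two_mul_natDegree_le_and_coeff (t : ℕ) :
    (descProd (monodromyFactor c) (2 * t) 0 0).natDegree ≤ 2 * t ∧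
    (descProd (monodromyFactor c) (2 * t) 1 0).natDegree ≤ 2 * t ∧
    (descProd (monodromyFactor c) (2 * t) 0 0).coeff (2 * t)
      = (-1) ^ t * ∏ n ∈ Finset.Icc 2 (2 * t + 1), c n := by
  induction t with
  | zero => simp [descProd_zero]
  | succ t ih =>
    obtain ⟨hp, hq, hcoeff⟩ := ih
    set P := descProd (monodromyFactor c) (2 * t)
    have hstep : descProd (monodromyFactor c) (2 * (t + 1))
        = !![1, C (c (2 * t + 3)) * X; 0, 1] * (!![1, 0; C (-c (2 * t + 2)) * X, 1] * P) := by
      rw [show 2 * (t + 1) = 2 * t + 1 + 1 by ring, descProd_succ, descProd_succ,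
        monodromyFactor_of_even c ⟨t + 1, by ring⟩, monodromyFactor_of_odd c ⟨t, rfl⟩]
    have hq' : (C (-c (2 * t + 2)) * X * P 0 0 + P 1 0).natDegree ≤ 2 * t + 1 :=
      natDegree_C_mul_X_mul_add_le _ hp (hq.trans (Nat.le_succ _))
    rw [hstep, unipotent_pair_mul_apply_zero_zero, unipotent_pair_mul_apply_one_zero,
      show 2 * (t + 1) = 2 * t + 1 + 1 by ring]
    refine ⟨natDegree_C_mul_X_mul_add_le _ hq' (hp.trans (by omega)),
      hq'.trans (Nat.le_succ _), ?_⟩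
    rw [coeff_C_mul_X_mul_add_succ _ (hp.trans (Nat.le_succ _)),
      coeff_C_mul_X_mul_add_succ _ hq, hcoeff,
      Finset.prod_Icc_succ_top (b := 2 * t + 2) (by omega),
      Finset.prod_Icc_succ_top (b := 2 * t + 1) (by omega)]
    ring

theorem descProd_monodromyFactor_two_mul_natDegree_and_leadingCoeff {t : ℕ}
    (hc : ∏ n ∈ Finset.Icc 2 (2 * t + 1), c n ≠ 0) :
    (descProd (monodromyFactor c) (2 * t) 0 0).natDegree = 2 * t ∧
    (descProd (monodromyFactor c) (2 * t) 0 0).leadingCoeff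
      = (-1) ^ t * ∏ n ∈ Finset.Icc 2 (2 * t + 1), c n := by
  obtain ⟨hdeg, -, hcoeff⟩ := descProd_monodromyFactor_two_mul_natDegree_le_and_coeff c t
  have hdeg_eq := natDegree_eq_of_le_of_coeff_ne_zero hdeg <| by
    rwa [hcoeff, ne_eq, ((isUnit_neg_one (α := R)).pow t).mul_right_eq_zero]
  exact ⟨hdeg_eq, by rw [leadingCoeff, hdeg_eq, hcoeff]⟩

end Monodromy

/-- With `M_k(λ) = I + λ δ_{k+1} [[0,0],[−1,0]]` for `k` odd and
`M_k(λ) = I + λ δ_{k+1} [[0,1],[0,0]]` for `k` even (`δ_n > 0`), the `(1,1)` entry of the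
product `M_{2j−2}(λ) ⋯ M_2(λ) M_1(λ)` is a polynomial in `λ` of degree `2j−2` with
leading coefficient `(−1)^{j+1} δ_{2j−1} δ_{2j−2} ⋯ δ_2`. -/
theorem product_monodromy_top_left_degree_leadingCoeff
    (j : ℕ) (hj : 1 ≤ j) (δ : ℕ → ℝ)
    (hδ : ∀ n ∈ Finset.Icc 2 (2 * j - 1), 0 < δ n)
    (M : ℕ → Matrix (Fin 2) (Fin 2) (Polynomial ℂ))
    (hM : ∀ k : ℕ, M k = 1 + (Polynomial.C ((δ (k + 1) : ℝ) : ℂ) * Polynomial.X) •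
      (if Odd k then (!![0, 0; -1, 0] : Matrix (Fin 2) (Fin 2) (Polynomial ℂ))
        else !![0, 1; 0, 0])) :
    (((List.range (2 * j - 2)).map fun i => M (2 * j - 2 - i)).prod 0 0).natDegree
        = 2 * j - 2 ∧
    (((List.range (2 * j - 2)).map fun i => M (2 * j - 2 - i)).prod 0 0).leadingCoeff
        = (-1 : ℂ) ^ (j + 1) * ∏ n ∈ Finset.Icc 2 (2 * j - 1), ((δ n : ℝ) : ℂ) := by
  obtain ⟨t, rfl⟩ : ∃ t, j = t + 1 := ⟨j - 1, by omega⟩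
  rw [show 2 * (t + 1) - 2 = 2 * t by omega, show 2 * (t + 1) - 1 = 2 * t + 1 by omega] at *
  have hM' : M = monodromyFactor fun n => ((δ n : ℝ) : ℂ) := funext hM
  have hprod : ∏ n ∈ Finset.Icc 2 (2 * t + 1), ((δ n : ℝ) : ℂ) ≠ 0 :=
    Finset.prod_ne_zero_iff.2 fun n hn => by exact_mod_cast (hδ n hn).ne'
  subst hM'
  rw [show (-1 : ℂ) ^ (t + 1 + 1) = (-1) ^ t by ring]
  exact descProd_monodromyFactor_two_mul_natDegree_and_leadingCoeff _ hprod
end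

section
/- Let K > 0 and p ∈ (0,1). If f is a polynomial of degree n with all zeroes real, f(0) = 1, and |f(iτ)| ≤ exp(Kτ^p) for all τ > 0, then its leading coefficient c satisfies |c| ≤ inf_{τ>0} exp(Kτ^p)/τ^n = (e p K / n)^{n/p}. -/
open Polynomial


lemma aux_pow_le_prod (τ : ℝ) (hτ : 0 < τ) (s : Multiset ℝ) (h : ∀ x ∈ s, τ ≤ x) :
    τ ^ Multiset.card s ≤ s.prod := by
  induction s using Multiset.induction with
  | empty => simp
  | cons a s ih =>
    simp only [Multiset.card_cons, Multiset.prod_cons, pow_succ']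
    exact mul_le_mul (h a (Multiset.mem_cons_self a s))
      (ih fun x hx => h x (Multiset.mem_cons_of_mem hx))
      (pow_nonneg hτ.le _) (hτ.le.trans (h a (Multiset.mem_cons_self a s)))




/-- If `f` is a complex polynomial of degree `n ≥ 1` with `f(0) = 1`, all roots real,
and `|f(iτ)| ≤ exp (K τ^p)` for all `τ > 0` (`K > 0`, `0 < p < 1`), then its leading
coefficient `c` satisfies `|c| ≤ (e p K / n)^{n/p}`. -/
theorem leadingCoeff_bound_of_real_roots (f : Polynomial ℂ) (n : ℕ) (hn : 1 ≤ n)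
    (hdeg : f.natDegree = n) (h0 : f.eval 0 = 1)
    (hroots : ∀ w : ℂ, f.IsRoot w → w.im = 0)
    (K p : ℝ) (hK : 0 < K) (hp0 : 0 < p) (hp1 : p < 1)
    (hgrowth : ∀ τ : ℝ, 0 < τ →
      ‖f.eval (Complex.I * τ)‖ ≤ Real.exp (K * τ ^ p)) :
    ‖f.leadingCoeff‖ ≤ (Real.exp 1 * p * K / n) ^ ((n : ℝ) / p) := by
  have hf0 : f ≠ 0 := fun h => by simp [h] at h0
  have hsplit : f.Splits := IsAlgClosed.splits f
  have hcard : Multiset.card f.roots = n := by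
    rw [← hdeg]; exact (Polynomial.splits_iff_card_roots.mp hsplit)
  have key : ∀ τ : ℝ, 0 < τ →
      ‖f.leadingCoeff‖ * τ ^ n ≤ Real.exp (K * τ ^ p) := by
    intro τ hτ
    have hfe := hsplit.eq_prod_roots
    have heval : ‖f.eval (Complex.I * τ)‖ =
        ‖f.leadingCoeff‖ *
          ((f.roots.map (fun r => ‖Complex.I * τ - r‖)).prod) := by
      conv_lhs => rw [hfe]
      rw [Polynomial.eval_mul, Polynomial.eval_C, norm_mul]
      congr 1
      rw [Polynomial.eval_multiset_prod, Multiset.map_map, show ∀ s : Multiset ℂ, ‖s.prod‖ = (s.map norm).prod from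
        fun s => map_multiset_prod (normHom (α := ℂ)) s,
        Multiset.map_map]
      congr 1
      ext r
      simp
    have hlow : τ ^ n ≤ (f.roots.map (fun r => ‖Complex.I * τ - r‖)).prod := by
      have := aux_pow_le_prod τ hτ (f.roots.map (fun r => ‖Complex.I * τ - r‖))
        (by
          intro x hx
          obtain ⟨r, hr, rfl⟩ := Multiset.mem_map.mp hx
          have him : r.im = 0 := hroots r ((Polynomial.mem_roots hf0).mp hr)
          have : (Complex.I * τ - r).im = τ := by simp [him]
          calc τ = |(Complex.I * τ - r).im| := by rw [this, abs_of_pos hτ]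
          _ ≤ ‖Complex.I * τ - r‖ := Complex.abs_im_le_norm _)
      simpa [hcard] using this
    calc ‖f.leadingCoeff‖ * τ ^ n
        ≤ ‖f.leadingCoeff‖ *
          (f.roots.map (fun r => ‖Complex.I * τ - r‖)).prod :=
          mul_le_mul_of_nonneg_left hlow (norm_nonneg _)
      _ = ‖f.eval (Complex.I * τ)‖ := heval.symm
      _ ≤ Real.exp (K * τ ^ p) := hgrowth τ hτ
  -- now optimize
  have hnpos : (0:ℝ) < n := by exact_mod_cast hn
  have hbase : (0:ℝ) < (n:ℝ) / (p * K) := div_pos hnpos (mul_pos hp0 hK)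
  set τ₀ : ℝ := ((n:ℝ) / (p * K)) ^ (1/p) with hτ₀def
  have hτ₀ : 0 < τ₀ := Real.rpow_pos_of_pos hbase _
  have h1 := key τ₀ hτ₀
  have hpow : τ₀ ^ p = (n:ℝ) / (p * K) := by
    rw [hτ₀def, ← Real.rpow_mul hbase.le, one_div, inv_mul_cancel₀ hp0.ne',
      Real.rpow_one]
  have hKτ : K * τ₀ ^ p = (n:ℝ) / p := by
    rw [hpow]; field_simp
  have hτ₀n : τ₀ ^ n = ((n:ℝ) / (p * K)) ^ ((n:ℝ)/p) := by
    rw [← Real.rpow_natCast τ₀ n, hτ₀def, ← Real.rpow_mul hbase.le]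
    congr 1
    field_simp
  have hineq : ‖f.leadingCoeff‖ ≤ Real.exp ((n:ℝ)/p) / τ₀ ^ n := by
    rw [le_div_iff₀ (pow_pos hτ₀ n)]
    rw [hKτ] at h1
    exact h1
  refine hineq.trans (le_of_eq ?_)
  rw [hτ₀n, ← Real.exp_one_rpow ((n:ℝ)/p), div_eq_mul_inv,
    ← Real.inv_rpow hbase.le, ← Real.mul_rpow (Real.exp_pos 1).le (inv_nonneg.mpr hbase.le)]
  congr 1
  rw [inv_div]
  ring
end
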